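/- arXiv:math/0407391 — 4 statements merged into one kernel-verified Lean document; each statement's English description precedes it below -/
import Mathlib

section
/- A centered Gaussian is not the Fourier transform of a compactly supported finite measure: for every t > 0, γ > 0 and every finite complex measure μ supported in [−γ, γ], it is not the case that ∫ e^{iyv} dμ(v) = e^{-t y²} for all y ∈ ℝ. -/
/-!
Splitting off real and imaginary parts using `φ(-y) = conj φ(y)` for the Fourier transforms of
positive measures, the identity forces `μ̂₁ - μ̂₂` to be the Gaussian, which is the
characteristic function of the centred normal law `N(0, 2t)`. By uniqueness of characteristic
functions, `μ₁ = μ₂ + N(0, 2t)`; but the normal law charges every nonempty open set, in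
particular the complement of `[-γ, γ]`, where `μ₁` vanishes.
-/

open MeasureTheory Complex ProbabilityTheory ComplexConjugate BoundedContinuousFunction

lemma eq_of_add_I_mul_eq_of_conj_neg {α : Type*} [InvolutiveNeg α] {f g h : α → ℂ}
    (hf : ∀ y, f (-y) = conj (f y)) (hg : ∀ y, g (-y) = conj (g y))
    (hh : ∀ y, h (-y) = conj (h y)) (hfgh : ∀ y, f y + I * g y = h y) : f = h := by
  funext y
  have hconj : f y - I * g y = h y := by
    simpa [hf, hg, hh, sub_eq_add_neg] using congrArg conj (hfgh (-y))
  linear_combination (hfgh y + hconj) / 2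

lemma charFun_add_measure {E : Type*} [SeminormedAddCommGroup E] [InnerProductSpace ℝ E]
    [MeasurableSpace E] [OpensMeasurableSpace E] {μ ν : Measure E}
    [IsFiniteMeasure μ] [IsFiniteMeasure ν] (t : E) :
    charFun (μ + ν) t = charFun μ t + charFun ν t := by
  simp only [charFun_eq_integral_innerProbChar]
  exact integral_add_measure ((innerProbChar t).integrable μ) ((innerProbChar t).integrable ν)

lemma integral_cexp_I_mul_mul_eq_charFun (μ : Measure ℝ) (y : ℝ) :
    ∫ v, cexp (I * y * v) ∂μ = charFun μ y := by
  rw [charFun_apply_real]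
  congr with v
  ring_nf

lemma charFun_gaussianReal_zero {t : ℝ} (ht : 0 ≤ t) (y : ℝ) :
    charFun (gaussianReal 0 (2 * t).toNNReal) y = (Real.exp (-t * y ^ 2) : ℂ) := by
  rw [charFun_gaussianReal, Real.coe_toNNReal _ (by positivity)]
  push_cast
  ring_nf

instance isOpenPosMeasure_gaussianReal (m : ℝ) {v : NNReal} [NeZero v] :
    (gaussianReal m v).IsOpenPosMeasure :=
  (gaussianReal_absolutelyContinuous' m (NeZero.ne v)).isOpenPosMeasure

theorem gaussian_not_fourier_of_compactly_supported_measure_general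
    (t γ : ℝ) (ht : 0 < t)
    (μ₁ μ₂ μ₃ μ₄ : Measure ℝ)
    [IsFiniteMeasure μ₁] [IsFiniteMeasure μ₂]
    (h₁ : μ₁ (Set.Icc (-γ) γ)ᶜ = 0) :
    ¬ (∀ y : ℝ,
        ((∫ v : ℝ, Complex.exp (Complex.I * y * v) ∂μ₁)
          - (∫ v : ℝ, Complex.exp (Complex.I * y * v) ∂μ₂))
        + Complex.I * ((∫ v : ℝ, Complex.exp (Complex.I * y * v) ∂μ₃)
          - (∫ v : ℝ, Complex.exp (Complex.I * y * v) ∂μ₄))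
        = (Real.exp (-t * y ^ 2) : ℂ)) := by
  intro H
  have : NeZero (2 * t).toNNReal := ⟨by simpa using ht⟩
  have hreal : ∀ y, charFun μ₁ y - charFun μ₂ y = Real.exp (-t * y ^ 2) :=
    congrFun <| eq_of_add_I_mul_eq_of_conj_neg (g := fun y ↦ charFun μ₃ y - charFun μ₄ y)
      (fun y ↦ by simp) (fun y ↦ by simp) (fun y ↦ by rw [neg_sq, conj_ofReal])
      fun y ↦ by simpa only [integral_cexp_I_mul_mul_eq_charFun] using H y
  have hμ₁ : μ₁ = μ₂ + gaussianReal 0 (2 * t).toNNReal := by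
    refine Measure.ext_of_charFun (funext fun y ↦ ?_)
    rw [charFun_add_measure, charFun_gaussianReal_zero ht.le, ← hreal]
    ring
  rw [hμ₁, Measure.add_apply, add_eq_zero] at h₁
  exact isClosed_Icc.isOpen_compl.measure_ne_zero _ ⟨γ + 1, by simp⟩ h₁.2

/-- A Gaussian is not the Fourier transform of a finite complex measure supported in a
compact interval.  A finite complex Borel measure on ℝ is (by the Jordan / Hahn
decomposition) of the form μ₁ - μ₂ + i(μ₃ - μ₄) with each μⱼ a finite positive measure;
we state the result in this generality. -/
theorem gaussian_not_fourier_of_compactly_supported_measure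
    (t γ : ℝ) (ht : 0 < t) (hγ : 0 < γ)
    (μ₁ μ₂ μ₃ μ₄ : Measure ℝ)
    [IsFiniteMeasure μ₁] [IsFiniteMeasure μ₂] [IsFiniteMeasure μ₃] [IsFiniteMeasure μ₄]
    (h₁ : μ₁ (Set.Icc (-γ) γ)ᶜ = 0) (h₂ : μ₂ (Set.Icc (-γ) γ)ᶜ = 0)
    (h₃ : μ₃ (Set.Icc (-γ) γ)ᶜ = 0) (h₄ : μ₄ (Set.Icc (-γ) γ)ᶜ = 0) :
    ¬ (∀ y : ℝ,
        ((∫ v : ℝ, Complex.exp (Complex.I * y * v) ∂μ₁)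
          - (∫ v : ℝ, Complex.exp (Complex.I * y * v) ∂μ₂))
        + Complex.I * ((∫ v : ℝ, Complex.exp (Complex.I * y * v) ∂μ₃)
          - (∫ v : ℝ, Complex.exp (Complex.I * y * v) ∂μ₄))
        = (Real.exp (-t * y ^ 2) : ℂ)) :=
  gaussian_not_fourier_of_compactly_supported_measure_general t γ ht μ₁ μ₂ μ₃ μ₄ h₁
end

section
/- There is no measurable function w : (−γ, γ) → ℝ, integrable against e^{v²/(4t)}, and no constant c ∈ ℂ, with c ≠ 0, such that e^{-t y²} = c ∫_{−γ}^{γ} e^{iyv} e^{v²/(4t)} w(v) dv for all y ∈ ℝ. -/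
/-!
The function `g = 𝟙_(-γ,γ) · e^{v²/(4t)} w` is integrable, and evaluating the hypothesis at
`y = -2πξ` says that its Fourier transform is the Gaussian `c⁻¹ e^{-4π² t ξ²}`, which is integrable.
Fourier inversion then recovers `g` at any of its continuity points as a nonzero multiple of a
Gaussian, so `g` vanishes nowhere there; but `g` vanishes identically near `γ + 1`.
-/

open MeasureTheory Complex Real FourierTransform Filter Topology

section GaussianFourier

variable {V : Type*} [NormedAddCommGroup V] [InnerProductSpace ℝ V] [FiniteDimensional ℝ V]
  [MeasurableSpace V] [BorelSpace V]

theorem apply_ne_zero_of_fourier_eq_const_mul_gaussian {g : V → ℂ} (hg : Integrable g) {b c : ℂ}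
    (hb : 0 < b.re) (hc : c ≠ 0) (hFg : 𝓕 g = fun ξ ↦ c * cexp (-b * ‖ξ‖ ^ 2)) {v : V}
    (hv : ContinuousAt g v) : g v ≠ 0 := by
  have hFg_int : Integrable (𝓕 g) := by
    rw [hFg]
    simpa using (GaussianFourier.integrable_cexp_neg_mul_sq_norm_add hb 0 (0 : V)).const_mul c
  have hb0 : π / b ≠ 0 := div_ne_zero (ofReal_ne_zero.2 pi_ne_zero) (by rintro rfl; simp at hb)
  have hF_mul (w : V) :
      𝓕 (fun ξ : V ↦ c * cexp (-b * ‖ξ‖ ^ 2)) w = c * 𝓕 (fun ξ : V ↦ cexp (-b * ‖ξ‖ ^ 2)) w := by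
    simp only [Real.fourier_eq, Circle.smul_def, smul_eq_mul, mul_left_comm _ c, integral_const_mul]
  rw [← hg.fourierInv_fourier_eq hFg_int hv, fourierInv_eq_fourier_neg, hFg, hF_mul,
    fourier_gaussian_innerProductSpace hb]
  exact mul_ne_zero hc (mul_ne_zero (by simp [cpow_eq_zero_iff, hb0]) (Complex.exp_ne_zero _))

theorem fourier_ne_const_mul_gaussian_of_eventuallyEq_zero {g : V → ℂ} (hg : Integrable g) {v : V}
    (hgv : g =ᶠ[𝓝 v] 0) {b c : ℂ} (hb : 0 < b.re) (hc : c ≠ 0) :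
    𝓕 g ≠ fun ξ ↦ c * cexp (-b * ‖ξ‖ ^ 2) := fun hFg ↦
  apply_ne_zero_of_fourier_eq_const_mul_gaussian hg hb hc hFg
    (continuousAt_const.congr hgv.symm) hgv.eq_of_nhds

end GaussianFourier

theorem fourier_indicator_eq_setIntegral {s : Set ℝ} (hs : MeasurableSet s) (f : ℝ → ℂ)
    (ξ : ℝ) : 𝓕 (s.indicator f) ξ = ∫ v in s, cexp (I * ↑(-2 * π * ξ) * v) * f v := by
  rw [fourier_real_eq_integral_exp_smul, ← integral_indicator hs]
  congr 1 with v
  by_cases hv : v ∈ s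
  · simp only [Set.indicator_of_mem hv, smul_eq_mul]
    congr 2
    push_cast
    ring
  · simp [Set.indicator_of_notMem hv]

theorem gaussian_not_weighted_strip_transform_general (t γ : ℝ) (ht : 0 < t) :
    ¬ ∃ (w : ℝ → ℝ) (c : ℂ), Measurable w ∧ c ≠ 0 ∧
      IntegrableOn (fun v => Real.exp (v ^ 2 / (4 * t)) * w v) (Set.Ioo (-γ) γ) ∧
      ∀ y : ℝ,
        (Real.exp (-t * y ^ 2) : ℂ)
          = c * ∫ v in Set.Ioo (-γ) γ,
              Complex.exp (Complex.I * y * v) * Real.exp (v ^ 2 / (4 * t)) * (w v : ℂ) := by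
  rintro ⟨w, c, -, hc, hint, heq⟩
  set g : ℝ → ℂ := (Set.Ioo (-γ) γ).indicator fun v ↦ Real.exp (v ^ 2 / (4 * t)) * w v
  have hg : Integrable g :=
    (integrable_indicator_iff measurableSet_Ioo).2 (by exact_mod_cast hint.ofReal (𝕜 := ℂ))
  have hgγ : g =ᶠ[𝓝 (γ + 1)] 0 := by
    filter_upwards [Ioi_mem_nhds (lt_add_one γ)] with v hv
    exact Set.indicator_of_notMem (fun h ↦ h.2.not_gt hv) _
  refine fourier_ne_const_mul_gaussian_of_eventuallyEq_zero hg hgγ (b := ((4 * π ^ 2 * t : ℝ) : ℂ))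
    (by rw [ofReal_re]; positivity) (inv_ne_zero hc) (funext fun ξ ↦ ?_)
  rw [fourier_indicator_eq_setIntegral measurableSet_Ioo, eq_inv_mul_iff_mul_eq₀ hc]
  simp_rw [← mul_assoc]
  rw [← heq, Complex.ofReal_exp]
  congr 1
  rw [Real.norm_eq_abs, ← ofReal_pow, sq_abs]
  push_cast
  ring

theorem gaussian_not_weighted_strip_transform (t γ : ℝ) (ht : 0 < t) (hγ : 0 < γ) :
    ¬ ∃ (w : ℝ → ℝ) (c : ℂ), Measurable w ∧ c ≠ 0 ∧
      IntegrableOn (fun v => Real.exp (v ^ 2 / (4 * t)) * w v) (Set.Ioo (-γ) γ) ∧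
      ∀ y : ℝ,
        (Real.exp (-t * y ^ 2) : ℂ)
          = c * ∫ v in Set.Ioo (-γ) γ,
              Complex.exp (Complex.I * y * v) * Real.exp (v ^ 2 / (4 * t)) * (w v : ℂ) :=
  gaussian_not_weighted_strip_transform_general t γ ht
end

section
/- Let φ ∈ ℝ with π/4 < φ < π/2, so that cos(2φ) ∈ (−1, 0). Set a = (−cos 2φ)^{-1/2} and b = (a² − a^{-2})^{1/2}, and let g = [[a, b],[0, 1/a]] ∈ SL(2,ℝ) and z = diag(e^{iφ}, e^{-iφ}). Then P(gz) = −2, where P(m) = tr(m mᵗ). -/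
/-! Writing `e = exp (iφ)`, the matrix `g z` is `!![a e, b e⁻¹; 0, a⁻¹ e⁻¹]`, so `P (g z)` is
`a² e² + (b² + a⁻²) e⁻²`. The choice of `b` makes `b² + a⁻² = a²`, hence
`P (g z) = a² (e² + e⁻²) = 2 a² cos 2φ`, and the choice of `a` makes `a² cos 2φ = -1`. -/

open Matrix Complex Real

theorem Matrix.trace_mul_transpose {n R : Type*} [Fintype n] [CommSemiring R]
    (M : Matrix n n R) : trace (M * Mᵀ) = ∑ i, ∑ j, M i j ^ 2 := by
  simp only [trace, diag, mul_apply, transpose_apply, sq]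

theorem Matrix.trace_mul_transpose_upper_mul_diagonal_fin_two {R : Type*} [CommRing R]
    (a b d x y : R) :
    trace ((!![a, b; 0, d] * !![x, 0; 0, y]) * (!![a, b; 0, d] * !![x, 0; 0, y])ᵀ) =
      (a * x) ^ 2 + (b * y) ^ 2 + (d * y) ^ 2 := by
  rw [mul_fin_two, trace_mul_transpose]
  simp [Fin.sum_univ_two]

theorem Complex.exp_mul_I_sq_add_exp_neg_mul_I_sq (θ : ℂ) :
    exp (I * θ) ^ 2 + exp (-I * θ) ^ 2 = 2 * cos (2 * θ) := by
  rw [two_cos, ← exp_nat_mul, ← exp_nat_mul]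
  push_cast
  ring_nf

theorem Real.inv_sqrt_neg_sq_mul_self {c : ℝ} (hc : c < 0) : (√(-c))⁻¹ ^ 2 * c = -1 := by
  rw [inv_pow, sq_sqrt (by linarith), ← neg_inv, neg_mul, inv_mul_cancel₀ hc.ne]

theorem Real.one_le_inv_sqrt_neg_sq {c : ℝ} (hc : c < 0) (hc1 : -1 ≤ c) : 1 ≤ (√(-c))⁻¹ ^ 2 := by
  rw [inv_pow, sq_sqrt (by linarith)]
  exact one_le_inv₀ (by linarith) |>.mpr (by linarith)

theorem sub_inv_nonneg_of_one_le {K : Type*} [Field K] [LinearOrder K] [IsStrictOrderedRing K]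
    {x : K} (hx : 1 ≤ x) : 0 ≤ x - x⁻¹ :=
  sub_nonneg.mpr ((inv_le_one_of_one_le₀ hx).trans hx)

theorem boundary_point_value (φ : ℝ) (h1 : Real.pi / 4 < φ) (h2 : φ < Real.pi / 2) :
    let a : ℝ := (Real.sqrt (-Real.cos (2 * φ)))⁻¹
    let b : ℝ := Real.sqrt (a ^ 2 - (a ^ 2)⁻¹)
    let g : Matrix (Fin 2) (Fin 2) ℂ := !![(a : ℂ), (b : ℂ); 0, (a : ℂ)⁻¹]
    let z : Matrix (Fin 2) (Fin 2) ℂ :=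
      !![Complex.exp (Complex.I * φ), 0; 0, Complex.exp (-Complex.I * φ)]
    Matrix.trace ((g * z) * (g * z)ᵀ) = -2 := by
  intro a b g z
  have hcos : Real.cos (2 * φ) < 0 :=
    cos_neg_of_pi_div_two_lt_of_lt (by linarith) (by linarith [pi_pos])
  have ha : a ^ 2 * Real.cos (2 * φ) = -1 := inv_sqrt_neg_sq_mul_self hcos
  have hb : b ^ 2 = a ^ 2 - (a ^ 2)⁻¹ :=
    sq_sqrt (sub_inv_nonneg_of_one_le (one_le_inv_sqrt_neg_sq hcos (neg_one_le_cos _)))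
  have hab : (b : ℂ) ^ 2 + ((a : ℂ)⁻¹) ^ 2 = (a : ℂ) ^ 2 := by
    rw [inv_pow]; exact_mod_cast (by rw [hb]; ring : b ^ 2 + (a ^ 2)⁻¹ = a ^ 2)
  calc trace ((g * z) * (g * z)ᵀ)
      = (a : ℂ) ^ 2 * (exp (I * φ) ^ 2 + exp (-I * φ) ^ 2) := by
        rw [trace_mul_transpose_upper_mul_diagonal_fin_two]
        linear_combination exp (-I * φ) ^ 2 * hab
    _ = 2 * ((a ^ 2 * Real.cos (2 * φ) : ℝ) : ℂ) := by
        rw [exp_mul_I_sq_add_exp_neg_mul_I_sq]; push_cast; ring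
    _ = -2 := by rw [ha]; push_cast; ring
end

section
/- Let φ ∈ ℝ with π/4 < φ < π/2 and c = (−cos 2φ)^{1/2} ∈ (0,1). Define a : [0,1] → ℝ by a(s) = (c + s(1 − c))/c, and σ(s) = 2 a(s)² cos(2φ). Then σ is continuous and strictly decreasing on [0,1], with σ(0) = 2 cos(2φ) ∈ (−2, 0) and σ(1) = −2; moreover σ(s) = P(γ(s)·diag(e^{iφ}, e^{-iφ})) where γ(s) = [[a(s), b(s)],[0, 1/a(s)]] with b(s) = (a(s)² − a(s)^{-2})^{1/2} and P(m) = tr(m mᵗ). -/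
open Matrix Complex Real

/-!
Along the curve, `a` runs affinely from `1` to `1 / c`, so `σ = 2 a² cos 2φ` runs from `2 cos 2φ`
down to `2 cos 2φ / c² = -2`, monotonically because `cos 2φ < 0`. For the trace, the choice
`b² = a² - a⁻²` makes the two entries of the second column contribute `a² e^{-2iφ}` together,
so `P(γ z) = a² (e^{2iφ} + e^{-2iφ}) = 2 a² cos 2φ`.
-/

theorem cos_two_mul_mem_Ioo {φ : ℝ} (h1 : π / 4 < φ) (h2 : φ < π / 2) :
    Real.cos (2 * φ) ∈ Set.Ioo (-1) 0 := by
  refine ⟨?_, Real.cos_neg_of_pi_div_two_lt_of_lt (by linarith) (by linarith)⟩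
  simpa using Real.cos_lt_cos_of_nonneg_of_le_pi (by linarith : 0 ≤ 2 * φ) le_rfl (by linarith)

theorem sqrt_neg_mem_Ioo_zero_one {x : ℝ} (hx : x ∈ Set.Ioo (-1) 0) :
    √(-x) ∈ Set.Ioo 0 1 :=
  ⟨Real.sqrt_pos.mpr (by linarith [hx.2]), (Real.sqrt_lt' one_pos).mpr (by linarith [hx.1])⟩

section Interpolation

variable {c : ℝ}

theorem one_le_add_mul_one_sub_div (hc₀ : 0 < c) (hc₁ : c ≤ 1) {s : ℝ} (hs : 0 ≤ s) :
    1 ≤ (c + s * (1 - c)) / c := by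
  rw [le_div_iff₀ hc₀]
  nlinarith

theorem strictMono_add_mul_one_sub_div (hc₀ : 0 < c) (hc₁ : c < 1) :
    StrictMono fun s : ℝ => (c + s * (1 - c)) / c := fun s t hst => by
  have : 0 < 1 - c := sub_pos.mpr hc₁
  dsimp only
  gcongr

end Interpolation

theorem StrictMonoOn.strictAntiOn_mul_sq_mul_of_neg {f : ℝ → ℝ} {s : Set ℝ}
    (hf : StrictMonoOn f s) (hf₀ : ∀ x ∈ s, 0 ≤ f x) {C k : ℝ} (hC : 0 < C) (hk : k < 0) :
    StrictAntiOn (fun x => C * f x ^ 2 * k) s := fun x hx y hy hxy => by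
  have hfx : 0 ≤ f x := hf₀ x hx
  have hfxy : f x < f y := hf hx hy hxy
  exact mul_lt_mul_of_neg_right (by gcongr) hk

theorem Matrix.trace_mul_transpose_self {m n R : Type*} [Fintype m] [Fintype n] [CommSemiring R]
    (A : Matrix m n R) : trace (A * Aᵀ) = ∑ i, ∑ j, A i j ^ 2 := by
  simp [trace, mul_apply, sq]

theorem trace_sq_upperTriangular_mul_exp_diagonal (a b θ : ℂ)
    (hb : b ^ 2 = a ^ 2 - (a ^ 2)⁻¹) :
    trace ((!![a, b; 0, a⁻¹] * !![exp (I * θ), 0; 0, exp (-I * θ)]) *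
        (!![a, b; 0, a⁻¹] * !![exp (I * θ), 0; 0, exp (-I * θ)])ᵀ) =
      2 * a ^ 2 * cos (2 * θ) := by
  rw [trace_mul_transpose_self, mul_fin_two]
  simp only [mul_zero, add_zero, zero_add, zero_mul, of_apply, cons_val', cons_val_fin_one,
    Fin.sum_univ_two, cons_val_zero, cons_val_one, ne_eq, OfNat.ofNat_ne_zero, not_false_eq_true,
    zero_pow]
  linear_combination exp (-I * θ) ^ 2 * hb + a ^ 2 * exp_mul_I_sq_add_exp_neg_mul_I_sq θ

theorem escape_curve (φ : ℝ) (h1 : Real.pi / 4 < φ) (h2 : φ < Real.pi / 2) :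
    let c : ℝ := Real.sqrt (-Real.cos (2 * φ))
    let a : ℝ → ℝ := fun s => (c + s * (1 - c)) / c
    let b : ℝ → ℝ := fun s => Real.sqrt ((a s) ^ 2 - ((a s) ^ 2)⁻¹)
    let γ : ℝ → Matrix (Fin 2) (Fin 2) ℂ :=
      fun s => !![(a s : ℂ), (b s : ℂ); 0, (a s : ℂ)⁻¹]
    let z : Matrix (Fin 2) (Fin 2) ℂ :=
      !![Complex.exp (Complex.I * φ), 0; 0, Complex.exp (-Complex.I * φ)]
    let σ : ℝ → ℝ := fun s => 2 * (a s) ^ 2 * Real.cos (2 * φ)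
    c ∈ Set.Ioo (0 : ℝ) 1 ∧
    ContinuousOn σ (Set.Icc 0 1) ∧
    StrictAntiOn σ (Set.Icc 0 1) ∧
    σ 0 = 2 * Real.cos (2 * φ) ∧
    σ 0 ∈ Set.Ioo (-2 : ℝ) 0 ∧
    σ 1 = -2 ∧
    ∀ s ∈ Set.Icc (0 : ℝ) 1,
      Matrix.trace ((γ s * z) * (γ s * z)ᵀ) = (σ s : ℂ) := by
  intro c a b γ z σ
  have hcos := cos_two_mul_mem_Ioo h1 h2
  have hc : c ∈ Set.Ioo 0 1 := sqrt_neg_mem_Ioo_zero_one hcos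
  have ha : ∀ s ∈ Set.Icc (0 : ℝ) 1, 1 ≤ a s := fun s hs =>
    one_le_add_mul_one_sub_div hc.1 hc.2.le hs.1
  have ha₀ : a 0 = 1 := by simp [a, hc.1.ne']
  have ha₁ : a 1 ^ 2 * Real.cos (2 * φ) = -1 := by
    simp only [a, one_mul, add_sub_cancel, one_div, inv_pow, c,
      Real.sq_sqrt (neg_nonneg.mpr hcos.2.le)]
    field_simp [hcos.2.ne]
  refine ⟨hc, by fun_prop, ?_, by simp [σ, ha₀], ?_, by linear_combination 2 * ha₁,
    fun s hs => ?_⟩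
  · exact ((strictMono_add_mul_one_sub_div hc.1 hc.2).strictMonoOn _)
      |>.strictAntiOn_mul_sq_mul_of_neg (fun s hs => zero_le_one.trans (ha s hs)) two_pos hcos.2
  · simp only [σ, ha₀]
    constructor <;> linarith [hcos.1, hcos.2]
  · have ha₂ : 1 ≤ a s ^ 2 := one_le_pow₀ (ha s hs)
    have hb : b s ^ 2 = a s ^ 2 - (a s ^ 2)⁻¹ :=
      Real.sq_sqrt (sub_nonneg.mpr ((inv_le_one_of_one_le₀ ha₂).trans ha₂))
    convert trace_sq_upperTriangular_mul_exp_diagonal (a s) (b s) φ (by exact_mod_cast hb)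
    push_cast [σ]
    rfl
end
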